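/- Let n be even and T be an n × n bibifix-free matrix. Then every (n+1) × (n+1) matrix obtained from T by inserting a new row and a new column at index ⌊n/2⌋+1 (with arbitrary entries in the new row and column, all other entries inherited from T) is bibifix-free. -/
import Mathlib


def topLeft {α : Type*} {n : ℕ} (T : Matrix (Fin n) (Fin n) α) (r : ℕ) (h : r ≤ n) :
    Matrix (Fin r) (Fin r) α :=
  fun a b => T (Fin.castLE h a) (Fin.castLE h b)

def botRight {α : Type*} {n : ℕ} (T : Matrix (Fin n) (Fin n) α) (r : ℕ) (h : r ≤ n) :
    Matrix (Fin r) (Fin r) α :=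
  fun a b => T ⟨n - r + a, by have := a.isLt; omega⟩ ⟨n - r + b, by have := b.isLt; omega⟩

def BibifixFree {α : Type*} {n : ℕ} (T : Matrix (Fin n) (Fin n) α) : Prop :=
  ∀ (r : ℕ) (_ : 1 ≤ r) (h2 : r < n), topLeft T r h2.le ≠ botRight T r h2.le

/-- The original index in `T` corresponding to an index of `T'` different from the
inserted row/column index `⌊n/2⌋` (0-indexed; this is position `⌊n/2⌋+1` 1-indexed). -/
def insIdx (n : ℕ) (i : Fin (n + 1)) (h : (i : ℕ) ≠ n / 2) : Fin n :=
  if hl : (i : ℕ) < n / 2 then ⟨i, by have := Nat.div_le_self n 2; omega⟩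
  else ⟨(i : ℕ) - 1, by have := i.isLt; omega⟩

/-- `T' ∈ ψ(T)`: `T'` is obtained from `T` by inserting a new row and a new column at
index `⌊n/2⌋+1` (1-indexed), with arbitrary entries there and all other entries inherited. -/
def InPsi {α : Type*} {n : ℕ} (T : Matrix (Fin n) (Fin n) α)
    (T' : Matrix (Fin (n + 1)) (Fin (n + 1)) α) : Prop :=
  ∀ (i j : Fin (n + 1)) (hi : (i : ℕ) ≠ n / 2) (hj : (j : ℕ) ≠ n / 2),
    T' i j = T (insIdx n i hi) (insIdx n j hj)

theorem stmt_5 {α : Type*} {n : ℕ} (hn : Even n) (T : Matrix (Fin n) (Fin n) α)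
    (hT : BibifixFree T) (T' : Matrix (Fin (n + 1)) (Fin (n + 1)) α) (hT' : InPsi T T') :
    BibifixFree T' := by
  obtain ⟨m, hm⟩ := hn
  have hn2 : n / 2 = m := by omega
  -- translation lemmas for insIdx
  have ins_lo : ∀ (a : ℕ) (ha : a < n + 1) (h2 : a < m),
      insIdx n ⟨a, ha⟩ (by simp only [Fin.val_mk]; omega) = ⟨a, by omega⟩ := by
    intro a ha h2
    unfold insIdx
    rw [dif_pos (by simp only [Fin.val_mk]; omega)]
  have ins_hi : ∀ (a : ℕ) (ha : a + 1 < n + 1) (h2 : m ≤ a),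
      insIdx n ⟨a + 1, ha⟩ (by simp only [Fin.val_mk]; omega) = ⟨a, by omega⟩ := by
    intro a ha h2
    unfold insIdx
    rw [dif_neg (by simp only [Fin.val_mk]; omega)]
    exact Fin.ext (by simp)
  intro r hr1 hr2 heq
  have hrn : r ≤ n := by omega
  have hm1 : 1 ≤ m := by omega
  have key : ∀ (a b : ℕ) (ha : a < r) (hb : b < r),
      T' ⟨a, by omega⟩ ⟨b, by omega⟩ =
      T' ⟨n + 1 - r + a, by omega⟩ ⟨n + 1 - r + b, by omega⟩ := by
    intro a b ha hb
    have := congrFun (congrFun heq ⟨a, ha⟩) ⟨b, hb⟩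
    simpa [topLeft, botRight, Fin.castLE] using this
  by_cases hcase : r ≤ m
  · -- small case : the two blocks avoid the inserted row/column
    apply hT r hr1 (by omega)
    funext a b
    have ha : (a : ℕ) < r := a.isLt
    have hb : (b : ℕ) < r := b.isLt
    have h1 := hT' ⟨(a : ℕ), by omega⟩ ⟨(b : ℕ), by omega⟩
      (by simp only [Fin.val_mk]; omega) (by simp only [Fin.val_mk]; omega)
    have h2 := hT' ⟨n - r + a + 1, by omega⟩ ⟨n - r + b + 1, by omega⟩
      (by simp only [Fin.val_mk]; omega) (by simp only [Fin.val_mk]; omega)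
    rw [ins_lo _ _ (by omega), ins_lo _ _ (by omega)] at h1
    rw [ins_hi _ _ (by omega), ins_hi _ _ (by omega)] at h2
    have h3 := key a b ha hb
    show T ⟨(a : ℕ), _⟩ ⟨(b : ℕ), _⟩ = T ⟨n - r + a, _⟩ ⟨n - r + b, _⟩
    rw [← h1, ← h2, h3]
    congr 1 <;> exact Fin.ext (by simp only [Fin.val_mk]; omega)
  · -- big case : diagonal periodicity
    push_neg at hcase
    obtain ⟨p, hp⟩ : ∃ p, p = n + 1 - r := ⟨_, rfl⟩
    have hp1 : 1 ≤ p := by omega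
    have hpm : p ≤ m := by omega
    have iter : ∀ (k a b : ℕ) (ha : a + k * p ≤ n) (hb : b + k * p ≤ n),
        T' ⟨a, by omega⟩ ⟨b, by omega⟩ = T' ⟨a + k * p, by omega⟩ ⟨b + k * p, by omega⟩ := by
      intro k
      induction k with
      | zero =>
        intro a b ha hb
        congr 1 <;> exact Fin.ext (by simp)
      | succ k ih =>
        intro a b ha hb
        have hstep : a + (k + 1) * p = a + k * p + p := by ring
        have hstep' : b + (k + 1) * p = b + k * p + p := by ring
        rw [ih a b (by omega) (by omega)]
        have hlt : a + k * p < r := by omega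
        have hlt' : b + k * p < r := by omega
        rw [key (a + k * p) (b + k * p) hlt hlt']
        congr 1 <;> exact Fin.ext (by simp only [Fin.val_mk]; omega)
    obtain ⟨q, hq⟩ : ∃ q, q = n % p + 1 := ⟨_, rfl⟩
    have hmod := Nat.mod_lt n (show 0 < p by omega)
    have hqp : q ≤ p := by omega
    have hKp : (n / p) * p = n + 1 - q := by
      have h := Nat.div_add_mod n p
      rw [Nat.mul_comm]
      omega
    apply hT q (by omega) (by omega)
    funext a b
    have ha : (a : ℕ) < q := a.isLt
    have hb : (b : ℕ) < q := b.isLt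
    have h1 := hT' ⟨(a : ℕ), by omega⟩ ⟨(b : ℕ), by omega⟩
      (by simp only [Fin.val_mk]; omega) (by simp only [Fin.val_mk]; omega)
    have h2 := hT' ⟨n - q + a + 1, by omega⟩ ⟨n - q + b + 1, by omega⟩
      (by simp only [Fin.val_mk]; omega) (by simp only [Fin.val_mk]; omega)
    rw [ins_lo _ _ (by omega), ins_lo _ _ (by omega)] at h1
    rw [ins_hi _ _ (by omega), ins_hi _ _ (by omega)] at h2
    have h3 := iter (n / p) a b (by omega) (by omega)
    show T ⟨(a : ℕ), _⟩ ⟨(b : ℕ), _⟩ = T ⟨n - q + a, _⟩ ⟨n - q + b, _⟩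
    rw [← h1, ← h2, h3]
    congr 1 <;> exact Fin.ext (by simp only [Fin.val_mk]; omega)
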